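/- arXiv:0807.0131 — 11 statements merged into one kernel-verified Lean document; each statement's English description precedes it below -/
import Mathlib

section
/- The function H(x,y) = (a²x⁸ + 2ax⁵ + x² + y²)³ / (729(3 + 4ax³)⁸) is a first integral of the planar system ẋ = -y - (4/3)a x³ y, ẏ = x - (16/3)a x² y² + a x⁴, i.e., its derivative along the vector field vanishes identically wherever 3 + 4ax³ ≠ 0. -/
/-!
Both `N = a²x⁸ + 2ax⁵ + x² + y²` and `D = 3 + 4ax³` are invariant algebraic curves (Darboux
polynomials) of the field `(P, Q)`: `P N_x + Q N_y = -(32/3) a x² y · N` and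
`P D_x + Q D_y = -4 a x² y · D`. Along the flow `N³ / D⁸` therefore has logarithmic derivative
`3 · (-(32/3) a x² y) - 8 · (-4 a x² y) = 0`.
-/

lemma natCast_mul_pow_pred_mul (m : ℕ) (t : ℝ) : (m : ℝ) * t ^ (m - 1) * t = m * t ^ m := by
  cases m with
  | zero => simp
  | succ m => simp [pow_succ, mul_assoc]

lemma HasDerivAt.pow_div_const_mul_pow {f g : ℝ → ℝ} {f' g' t : ℝ}
    (hf : HasDerivAt f f' t) (hg : HasDerivAt g g' t) (hg0 : g t ≠ 0) (m n : ℕ) (c : ℝ) :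
    HasDerivAt (fun s => f s ^ m / (c * g s ^ n))
      ((m * f t ^ (m - 1) * f' * g t ^ n - f t ^ m * (n * g t ^ (n - 1) * g'))
        / (g t ^ n) ^ 2 / c) t := by
  have h := ((hf.fun_pow m).fun_div (hg.fun_pow n) (pow_ne_zero n hg0)).div_const c
  refine h.congr_of_eventuallyEq (.of_forall fun s => ?_)
  simp only [div_div, mul_comm c]

theorem pow_div_pow_directional_deriv_eq_zero {N D : ℝ → ℝ → ℝ}
    {x y P Q Nx Ny Dx Dy kN kD : ℝ} (m n : ℕ) (c : ℝ)
    (hNx : HasDerivAt (N · y) Nx x) (hNy : HasDerivAt (N x ·) Ny y)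
    (hDx : HasDerivAt (D · y) Dx x) (hDy : HasDerivAt (D x ·) Dy y) (hD : D x y ≠ 0)
    (hNk : P * Nx + Q * Ny = kN * N x y) (hDk : P * Dx + Q * Dy = kD * D x y)
    (hk : m * kN = n * kD) :
    P * deriv (fun s => N s y ^ m / (c * D s y ^ n)) x
      + Q * deriv (fun s => N x s ^ m / (c * D x s ^ n)) y = 0 := by
  rw [(hNx.pow_div_const_mul_pow hDx hD m n c).deriv,
    (hNy.pow_div_const_mul_pow hDy hD m n c).deriv]
  set A := (m : ℝ) * N x y ^ (m - 1) * D x y ^ n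
  set B := N x y ^ m * (n * D x y ^ (n - 1))
  have key : P * (A * Nx - B * Dx) + Q * (A * Ny - B * Dy) = 0 := by
    linear_combination A * hNk - B * hDk + kN * D x y ^ n * natCast_mul_pow_pred_mul m (N x y)
      - kD * N x y ^ m * natCast_mul_pow_pred_mul n (D x y) + N x y ^ m * D x y ^ n * hk
  calc _ = (P * (A * Nx - B * Dx) + Q * (A * Ny - B * Dy)) / (D x y ^ n) ^ 2 / c := by ring
    _ = 0 := by rw [key, zero_div, zero_div]

/-- H(x,y) = (a²x⁸+2ax⁵+x²+y²)³/(729(3+4ax³)⁸) is a first integral of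
ẋ = -y-(4/3)ax³y, ẏ = x-(16/3)ax²y²+ax⁴ wherever 3+4ax³ ≠ 0. -/
theorem stmt_0 (a : ℝ) :
    ∀ x y : ℝ, 3 + 4 * a * x ^ 3 ≠ 0 →
      (-y - (4/3) * a * x ^ 3 * y) *
        deriv (fun x' : ℝ =>
          (a ^ 2 * x' ^ 8 + 2 * a * x' ^ 5 + x' ^ 2 + y ^ 2) ^ 3 /
            (729 * (3 + 4 * a * x' ^ 3) ^ 8)) x
      + (x - (16/3) * a * x ^ 2 * y ^ 2 + a * x ^ 4) *
        deriv (fun y' : ℝ =>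
          (a ^ 2 * x ^ 8 + 2 * a * x ^ 5 + x ^ 2 + y' ^ 2) ^ 3 /
            (729 * (3 + 4 * a * x ^ 3) ^ 8)) y = 0 := by
  intro x y hD
  have hNx : HasDerivAt (fun s => a ^ 2 * s ^ 8 + 2 * a * s ^ 5 + s ^ 2 + y ^ 2)
      (8 * a ^ 2 * x ^ 7 + 10 * a * x ^ 4 + 2 * x) x :=
    ((((hasDerivAt_pow 8 x).const_mul (a ^ 2)).add ((hasDerivAt_pow 5 x).const_mul (2 * a))).add
      (hasDerivAt_pow 2 x)).add_const (y ^ 2) |>.congr_deriv (by norm_num; ring)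
  have hNy : HasDerivAt (fun s => a ^ 2 * x ^ 8 + 2 * a * x ^ 5 + x ^ 2 + s ^ 2) (2 * y) y :=
    (hasDerivAt_pow 2 y).const_add _ |>.congr_deriv (by norm_num)
  have hDx : HasDerivAt (fun s => 3 + 4 * a * s ^ 3) (12 * a * x ^ 2) x :=
    ((hasDerivAt_pow 3 x).const_mul (4 * a)).const_add 3 |>.congr_deriv (by norm_num; ring)
  exact pow_div_pow_directional_deriv_eq_zero
    (N := fun x y => a ^ 2 * x ^ 8 + 2 * a * x ^ 5 + x ^ 2 + y ^ 2)
    (D := fun x _ => 3 + 4 * a * x ^ 3) (kN := -(32/3) * a * x ^ 2 * y) (kD := -4 * a * x ^ 2 * y)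
    3 8 729 hNx hNy hDx (hasDerivAt_const y _) hD (by ring) (by ring) (by norm_num; ring)
end

section
/- For the system ẋ = -y - (4/3)a x³ y, ẏ = x - (16/3)a x² y² + a x⁴, the functions f(x) = ((-16/3)a + 3(-4/3)a)x²/(1 + (4/3)ax³) and g(x) = (x + a x⁴)(1 + (4/3)a x³) satisfy the identity f(x)g(x) + g'(x) = 1 for all x with 1 + (4/3)ax³ ≠ 0. -/
/-- For f(x) = (-16/3·a + 3·(-4/3)·a)x²/(1+(4/3)ax³) and
g(x) = (x+ax⁴)(1+(4/3)ax³), one has f·g + g' = 1 wherever 1+(4/3)ax³ ≠ 0. -/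
theorem stmt_1 (a : ℝ) :
    ∀ x : ℝ, 1 + (4/3) * a * x ^ 3 ≠ 0 →
      (((-16/3) * a + 3 * ((-4/3) * a)) * x ^ 2 / (1 + (4/3) * a * x ^ 3)) *
        ((x + a * x ^ 4) * (1 + (4/3) * a * x ^ 3))
      + deriv (fun x' : ℝ => (x' + a * x' ^ 4) * (1 + (4/3) * a * x' ^ 3)) x = 1 := by
  intro x hx
  have h1 : HasDerivAt (fun x' : ℝ => x' + a * x' ^ 4) (1 + a * (4 * x ^ 3)) x := by
    simpa using (hasDerivAt_id x).fun_add ((hasDerivAt_pow 4 x).const_mul a)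
  have h2 : HasDerivAt (fun x' : ℝ => 1 + (4/3) * a * x' ^ 3) ((4/3) * a * (3 * x ^ 2)) x := by
    simpa using (hasDerivAt_const x (1:ℝ)).fun_add ((hasDerivAt_pow 3 x).const_mul ((4/3)*a))
  have h := (h1.fun_mul h2).deriv
  have cancel : (((-16/3) * a + 3 * ((-4/3) * a)) * x ^ 2 / (1 + (4/3) * a * x ^ 3)) *
      ((x + a * x ^ 4) * (1 + (4/3) * a * x ^ 3))
      = ((-16/3) * a + 3 * ((-4/3) * a)) * x ^ 2 * (x + a * x ^ 4) := by
    rw [div_mul_eq_mul_div, mul_div_assoc, mul_div_cancel_right₀ _ hx]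
  rw [cancel, h]
  ring
end

section
/- The function H(x,y) = (x² + y²)³ / (b x³ - 1) is a first integral of the system ẋ = -y + b x³ y, ẏ = x + (b/2)x²y² - (b/2)x⁴ on the open set where bx³ ≠ 1. -/
/-!
Along the flow, with `r² = x² + y²` and `D = b x³ - 1`, one has `ẋ = y D`, hence
`Ḋ = 3 b x² y D`, and `x ẋ + y ẏ = (b/2) x² y r²`, hence `(r⁶)˙ = 3 b x² y r⁶`.
The logarithmic derivatives of `r⁶` and of `D` agree, so `H = r⁶ / D` is constant along orbits.
-/

lemma hasDerivAt_sq_add_sq_pow_three_div_left (b y x : ℝ) (hD : b * x ^ 3 - 1 ≠ 0) :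
    HasDerivAt (fun x' : ℝ => (x' ^ 2 + y ^ 2) ^ 3 / (b * x' ^ 3 - 1))
      ((3 * (x ^ 2 + y ^ 2) ^ 2 * (2 * x) * (b * x ^ 3 - 1)
          - (x ^ 2 + y ^ 2) ^ 3 * (b * (3 * x ^ 2))) / (b * x ^ 3 - 1) ^ 2) x := by
  have hnum : HasDerivAt (fun x' : ℝ => (x' ^ 2 + y ^ 2) ^ 3)
      (3 * (x ^ 2 + y ^ 2) ^ 2 * (2 * x)) x := by
    simpa using ((hasDerivAt_pow 2 x).add_const (y ^ 2)).fun_pow 3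
  have hden : HasDerivAt (fun x' : ℝ => b * x' ^ 3 - 1) (b * (3 * x ^ 2)) x := by
    simpa using ((hasDerivAt_pow 3 x).const_mul b).sub_const 1
  exact hnum.div hden hD

lemma hasDerivAt_sq_add_sq_pow_three_div_right (c x y : ℝ) :
    HasDerivAt (fun y' : ℝ => (x ^ 2 + y' ^ 2) ^ 3 / c)
      (3 * (x ^ 2 + y ^ 2) ^ 2 * (2 * y) / c) y := by
  simpa using (((hasDerivAt_pow 2 y).const_add (x ^ 2)).pow 3).div_const c

/-- H(x,y) = (x²+y²)³/(bx³-1) is a first integral of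
ẋ = -y+bx³y, ẏ = x+(b/2)x²y²-(b/2)x⁴ wherever bx³ ≠ 1. -/
theorem stmt_2 (b : ℝ) :
    ∀ x y : ℝ, b * x ^ 3 ≠ 1 →
      (-y + b * x ^ 3 * y) *
        deriv (fun x' : ℝ => (x' ^ 2 + y ^ 2) ^ 3 / (b * x' ^ 3 - 1)) x
      + (x + (b/2) * x ^ 2 * y ^ 2 - (b/2) * x ^ 4) *
        deriv (fun y' : ℝ => (x ^ 2 + y' ^ 2) ^ 3 / (b * x ^ 3 - 1)) y = 0 := by
  intro x y h
  have hD : b * x ^ 3 - 1 ≠ 0 := sub_ne_zero.mpr h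
  rw [(hasDerivAt_sq_add_sq_pow_three_div_left b y x hD).deriv,
    (hasDerivAt_sq_add_sq_pow_three_div_right _ x y).deriv]
  field_simp
  ring
end

section
/- The function H(x,y) = (x² + y²)³ / (a x³ - 1)² is a first integral of the system ẋ = -y + a x³ y, ẏ = x + a x² y² on the open set where a x³ ≠ 1. -/
/-! Writing `r = x² + y²` and `w = a x³ - 1`, the horizontal component of the field factors as
`-y + a x³ y = y w`, and the two partial derivatives of `H = r³ / w²` are
`∂ₓH = 6 r² (x w - a x² r) / w³` and `∂ᵧH = 6 y r² / w²`. Hence the derivative of `H` along the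
field is `6 y r² / w² · (x w - a x² r + x + a x² y²)`, and the bracket vanishes identically. -/

lemma hasDerivAt_firstIntegral_fst (a y : ℝ) {x : ℝ} (hx : a * x ^ 3 ≠ 1) :
    HasDerivAt (fun x' : ℝ => (x' ^ 2 + y ^ 2) ^ 3 / (a * x' ^ 3 - 1) ^ 2)
      (6 * (x ^ 2 + y ^ 2) ^ 2 * (x * (a * x ^ 3 - 1) - a * x ^ 2 * (x ^ 2 + y ^ 2)) /
        (a * x ^ 3 - 1) ^ 3) x := by
  have hw : a * x ^ 3 - 1 ≠ 0 := sub_ne_zero.mpr hx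
  have hnum := ((hasDerivAt_pow 2 x).add_const (y ^ 2)).pow 3
  have hden := (((hasDerivAt_pow 3 x).const_mul a).sub_const 1).pow 2
  refine (hnum.div hden (pow_ne_zero 2 hw)).congr_deriv ?_
  simp only [Pi.pow_apply]
  rw [div_eq_div_iff (pow_ne_zero 2 (pow_ne_zero 2 hw)) (pow_ne_zero 3 hw)]
  norm_num
  ring

lemma hasDerivAt_firstIntegral_snd (a x y : ℝ) :
    HasDerivAt (fun y' : ℝ => (x ^ 2 + y' ^ 2) ^ 3 / (a * x ^ 3 - 1) ^ 2)
      (6 * y * (x ^ 2 + y ^ 2) ^ 2 / (a * x ^ 3 - 1) ^ 2) y := by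
  refine ((((hasDerivAt_pow 2 y).const_add (x ^ 2)).pow 3).div_const _).congr_deriv ?_
  ring

/-- H(x,y) = (x²+y²)³/(ax³-1)² is a first integral of
ẋ = -y+ax³y, ẏ = x+ax²y² wherever ax³ ≠ 1. -/
theorem stmt_3 (a : ℝ) :
    ∀ x y : ℝ, a * x ^ 3 ≠ 1 →
      (-y + a * x ^ 3 * y) *
        deriv (fun x' : ℝ => (x' ^ 2 + y ^ 2) ^ 3 / (a * x' ^ 3 - 1) ^ 2) x
      + (x + a * x ^ 2 * y ^ 2) *
        deriv (fun y' : ℝ => (x ^ 2 + y' ^ 2) ^ 3 / (a * x ^ 3 - 1) ^ 2) y = 0 := by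
  intro x y hx
  have hw : a * x ^ 3 - 1 ≠ 0 := sub_ne_zero.mpr hx
  rw [(hasDerivAt_firstIntegral_fst a y hx).deriv, (hasDerivAt_firstIntegral_snd a x y).deriv]
  field_simp
  ring
end

section
/- The change of coordinates u = x/(a x³ - 1)^{1/3}, v = y/(a x³ - 1)^{1/3} transforms the system ẋ = -y + a x³ y, ẏ = x + a x² y² into the linear system u̇ = -v, v̇ = u, i.e., along solutions of the original system one has u̇ = -v and v̇ = u wherever a x³ - 1 > 0 (or on a suitable branch near the origin). -/
/-!
Write `w = a x³ - 1`. Along solutions `ẋ = y w`, so `ẇ = 3 a x² ẋ = k w` with `k = 3 a x² y`.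
Differentiating `f / w^{1/3}` then produces the correction term `-(k / 3) f / w^{1/3}`: for `f = x`
it cancels the `a x³ y` in `ẋ`, leaving `-y`; for `f = y` it cancels the `a x² y²` in `ẏ`,
leaving `x`.
-/

theorem HasDerivAt.div_rpow_const {f w : ℝ → ℝ} {f' k t : ℝ} (p : ℝ)
    (hf : HasDerivAt f f' t) (hw : HasDerivAt w (k * w t) t) (hwt : 0 < w t) :
    HasDerivAt (fun s => f s / w s ^ p) ((f' - p * k * f t) / w t ^ p) t := by
  have hpow : HasDerivAt (fun s => w s ^ p) (k * w t * p * (w t ^ p / w t)) t := by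
    simpa only [Real.rpow_sub_one hwt.ne'] using hw.rpow_const (p := p) (Or.inl hwt.ne')
  have hpos : 0 < w t ^ p := Real.rpow_pos_of_pos hwt p
  refine (hf.div hpow hpos.ne').congr_deriv ?_
  field_simp

/-- u = x/(ax³-1)^{1/3}, v = y/(ax³-1)^{1/3} linearizes ẋ = -y+ax³y, ẏ = x+ax²y²
along solutions staying in the region ax³-1 > 0. -/
theorem stmt_4 (a : ℝ) (x y : ℝ → ℝ)
    (hx : ∀ t, HasDerivAt x (-(y t) + a * (x t) ^ 3 * y t) t)
    (hy : ∀ t, HasDerivAt y (x t + a * (x t) ^ 2 * (y t) ^ 2) t)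
    (hpos : ∀ t, a * (x t) ^ 3 - 1 > 0) :
    ∀ t,
      HasDerivAt (fun s => x s / (a * (x s) ^ 3 - 1) ^ ((1:ℝ)/3))
        (-(y t / (a * (x t) ^ 3 - 1) ^ ((1:ℝ)/3))) t ∧
      HasDerivAt (fun s => y s / (a * (x s) ^ 3 - 1) ^ ((1:ℝ)/3))
        (x t / (a * (x t) ^ 3 - 1) ^ ((1:ℝ)/3)) t := by
  intro t
  have hw : HasDerivAt (fun s => a * x s ^ 3 - 1)
      (3 * a * x t ^ 2 * y t * (a * x t ^ 3 - 1)) t :=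
    (((hx t).pow 3).const_mul a).sub_const 1 |>.congr_deriv (by push_cast; ring)
  constructor
  · exact ((hx t).div_rpow_const (1 / 3) hw (hpos t)).congr_deriv (by rw [← neg_div]; ring)
  · exact ((hy t).div_rpow_const (1 / 3) hw (hpos t)).congr_deriv (by ring)
end

section
/- The function H(x,y) = (x² + y²)² / (a x⁴ - 1) is a first integral of the system ẋ = -y + a y x⁴, ẏ = x + a x³ y² on the set where a x⁴ ≠ 1. -/
/-!
Write `r = x² + y²` and `d = a x⁴ - 1`. By the quotient rule `d² ∂ₓH = 4 x r d - 4 a x³ r²` and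
`d ∂ᵧH = 4 y r`, while the first component of the field is `-y + a y x⁴ = y d`. Hence
`d (X ∂ₓH + Y ∂ᵧH) = 4 x y r (d - a x² r + 1 + a x² y²)`, and the bracket vanishes identically.
-/

lemma hasDerivAt_sq_add_const_sq (c x : ℝ) :
    HasDerivAt (fun t : ℝ => (t ^ 2 + c) ^ 2) (4 * x * (x ^ 2 + c)) x :=
  (((hasDerivAt_pow 2 x).add_const c).fun_pow 2).congr_deriv (by norm_num; ring)

lemma hasDerivAt_const_add_sq_sq (c y : ℝ) :
    HasDerivAt (fun t : ℝ => (c + t ^ 2) ^ 2) (4 * y * (c + y ^ 2)) y :=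
  (((hasDerivAt_pow 2 y).const_add c).fun_pow 2).congr_deriv (by norm_num; ring)

lemma hasDerivAt_sq_add_sq_sq_div_fst (a y x : ℝ) (hd : a * x ^ 4 - 1 ≠ 0) :
    HasDerivAt (fun t : ℝ => (t ^ 2 + y ^ 2) ^ 2 / (a * t ^ 4 - 1))
      ((4 * x * (x ^ 2 + y ^ 2) * (a * x ^ 4 - 1) - (x ^ 2 + y ^ 2) ^ 2 * (4 * a * x ^ 3))
        / (a * x ^ 4 - 1) ^ 2) x := by
  have hden : HasDerivAt (fun t : ℝ => a * t ^ 4 - 1) (4 * a * x ^ 3) x :=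
    (((hasDerivAt_pow 4 x).const_mul a).sub_const 1).congr_deriv (by norm_num; ring)
  exact (hasDerivAt_sq_add_const_sq (y ^ 2) x).fun_div hden hd

lemma hasDerivAt_sq_add_sq_sq_div_snd (d x y : ℝ) :
    HasDerivAt (fun t : ℝ => (x ^ 2 + t ^ 2) ^ 2 / d) (4 * y * (x ^ 2 + y ^ 2) / d) y :=
  (hasDerivAt_const_add_sq_sq (x ^ 2) y).div_const d

/-- H(x,y) = (x²+y²)²/(ax⁴-1) is a first integral of
ẋ = -y+ayx⁴, ẏ = x+ax³y² wherever ax⁴ ≠ 1. -/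
theorem stmt_6 (a : ℝ) :
    ∀ x y : ℝ, a * x ^ 4 ≠ 1 →
      (-y + a * y * x ^ 4) *
        deriv (fun x' : ℝ => (x' ^ 2 + y ^ 2) ^ 2 / (a * x' ^ 4 - 1)) x
      + (x + a * x ^ 3 * y ^ 2) *
        deriv (fun y' : ℝ => (x ^ 2 + y' ^ 2) ^ 2 / (a * x ^ 4 - 1)) y = 0 := by
  intro x y hx
  have hd : a * x ^ 4 - 1 ≠ 0 := sub_ne_zero.mpr hx
  rw [(hasDerivAt_sq_add_sq_sq_div_fst a y x hd).deriv,
    (hasDerivAt_sq_add_sq_sq_div_snd _ x y).deriv]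
  field_simp
  ring
end

section
/- For f(x) = (b + 4a)x³/(1 - a x⁴) with b = 5a and g(x) = (x - (4/5)a x⁵)(1 - a x⁴), the identity f(x)g(x) + g'(x) = 1 holds for all x with a x⁴ ≠ 1. -/
/-! The factor `1 - a x⁴` of `g` cancels the denominator of `f`, so `f g = 9a x³ (x - (4/5) a x⁵)`
is a polynomial, and `f g + g'` is then a polynomial identity in which the `a x⁴` and `a² x⁸`
terms cancel. -/

theorem hasDerivAt_chouikha_g (a x : ℝ) :
    HasDerivAt (fun x' : ℝ => (x' - (4/5) * a * x' ^ 5) * (1 - a * x' ^ 4))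
      ((1 - 4 * a * x ^ 4) * (1 - a * x ^ 4) - 4 * a * x ^ 3 * (x - (4/5) * a * x ^ 5)) x := by
  have hp := (hasDerivAt_id' x).sub ((hasDerivAt_pow 5 x).const_mul ((4/5) * a))
  have hq := ((hasDerivAt_pow 4 x).const_mul a).const_sub 1
  refine (hp.mul hq).congr_deriv ?_
  norm_num
  ring

/-- For f(x) = (5a+4a)x³/(1-ax⁴) and g(x) = (x-(4/5)ax⁵)(1-ax⁴),
f·g + g' = 1 wherever ax⁴ ≠ 1. -/
theorem stmt_7 (a : ℝ) :
    ∀ x : ℝ, a * x ^ 4 ≠ 1 →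
      ((5 * a + 4 * a) * x ^ 3 / (1 - a * x ^ 4)) *
        ((x - (4/5) * a * x ^ 5) * (1 - a * x ^ 4))
      + deriv (fun x' : ℝ => (x' - (4/5) * a * x' ^ 5) * (1 - a * x' ^ 4)) x = 1 := by
  intro x hx
  have hden : 1 - a * x ^ 4 ≠ 0 := sub_ne_zero.mpr hx.symm
  have hfg : (5 * a + 4 * a) * x ^ 3 / (1 - a * x ^ 4) *
      ((x - (4/5) * a * x ^ 5) * (1 - a * x ^ 4)) = 9 * a * x ^ 3 * (x - (4/5) * a * x ^ 5) := by
    field_simp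
    ring
  rw [hfg, (hasDerivAt_chouikha_g a x).deriv]
  ring
end

section
/- The function I(x,y) = x²/(1+x)² + y²/(1+x)⁶ is a first integral of the Liénard-type system ẋ = y, ẏ = -g(x) - f(x)y² where f(x) = -P'(x)/(1+P(x)), g(x) = x(1+P(x)), and P(x) = 3x + 3x² + x³ = (1+x)³ - 1, valid for x ≠ -1. -/
/-! With `D' = -2 f D` and `F' = 2 g / D`, the function `F(x) + y² / D(x)` is a first integral of
`ẋ = y, ẏ = -g(x) - f(x) y²`: its derivative along the flow is `y (F' - 2 g / D) = 0`, the `y³`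
terms cancelling by the choice of `D`. Here `f(x) = -3/(1+x)` gives `D = (1+x)⁶`, and then
`g(x) = x(1+x)³` gives `F = x²/(1+x)²`. -/

theorem lienard_lieDeriv_add_sq_div_eq_zero {f g F D : ℝ → ℝ} {x : ℝ} (y : ℝ) (hD0 : D x ≠ 0)
    (hD : HasDerivAt D (-2 * f x * D x) x) (hF : HasDerivAt F (2 * g x / D x) x) :
    y * deriv (fun x' => F x' + y ^ 2 / D x') x
      + (-g x - f x * y ^ 2) * deriv (fun y' => F x + y' ^ 2 / D x) y = 0 := by
  have hx : HasDerivAt (fun x' => F x' + y ^ 2 / D x')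
      (2 * g x / D x + (0 * D x - y ^ 2 * (-2 * f x * D x)) / D x ^ 2) x :=
    hF.add ((hasDerivAt_const x (y ^ 2)).fun_div hD hD0)
  have hy : HasDerivAt (fun y' => F x + y' ^ 2 / D x) (2 * y / D x) y := by
    simpa using ((hasDerivAt_pow 2 y).div_const (D x)).const_add (F x)
  rw [hx.deriv, hy.deriv]
  field_simp
  ring

theorem hasDerivAt_sq_div_one_add_sq {x : ℝ} (hx : 1 + x ≠ 0) :
    HasDerivAt (fun t : ℝ => t ^ 2 / (1 + t) ^ 2) (2 * x / (1 + x) ^ 3) x := by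
  have hden : HasDerivAt (fun t : ℝ => (1 + t) ^ 2) (2 * (1 + x)) x := by
    simpa using ((hasDerivAt_id x).const_add 1).fun_pow 2
  have hnum : HasDerivAt (fun t : ℝ => t ^ 2) (2 * x) x := by simpa using hasDerivAt_pow 2 x
  exact (hnum.div hden (pow_ne_zero 2 hx)).congr_deriv (by field_simp; ring)

/-- I(x,y) = x²/(1+x)² + y²/(1+x)⁶ is a first integral of ẋ = y,
ẏ = -g(x)-f(x)y² with f(x) = -3/(1+x), g(x) = x(1+x)³, for x ≠ -1. -/
theorem stmt_11 :
    ∀ x y : ℝ, x ≠ -1 →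
      y * deriv (fun x' : ℝ => x' ^ 2 / (1 + x') ^ 2 + y ^ 2 / (1 + x') ^ 6) x
      + (-(x * (1 + x) ^ 3) - (-3 / (1 + x)) * y ^ 2) *
          deriv (fun y' : ℝ => x ^ 2 / (1 + x) ^ 2 + y' ^ 2 / (1 + x) ^ 6) y = 0 := by
  intro x y hx
  have h1 : 1 + x ≠ 0 := fun h => hx (by linarith)
  refine lienard_lieDeriv_add_sq_div_eq_zero (f := fun t => -3 / (1 + t))
    (g := fun t => t * (1 + t) ^ 3) (D := fun t => (1 + t) ^ 6) y (pow_ne_zero 6 h1) ?_ ?_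
  · have h : HasDerivAt (fun t : ℝ => (1 + t) ^ 6) (6 * (1 + x) ^ 5) x := by
      simpa using ((hasDerivAt_id x).const_add 1).fun_pow 6
    exact h.congr_deriv (by field_simp; ring)
  · exact (hasDerivAt_sq_div_one_add_sq h1).congr_deriv (by field_simp)
end

section
/- Let f, g be real-analytic near 0 with x·g(x) > 0 for x ≠ 0, F(x) = ∫₀ˣ f, φ(x) = ∫₀ˣ e^{F(s)} ds, and X(x) defined near 0 by X(x)² /2 = ∫₀ˣ g(s)e^{2F(s)} ds with X(x)·x > 0. If g'(x) + g(x)f(x) = 1 for all x near 0, then φ(x) = X(x) and g(x)e^{F(x)} = X(x) near 0 (i.e., the Urabe function h is identically zero). -/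
/-!
The identity `g' + g f = 1` says exactly that `(g e^F)' = e^F = φ'`; since both sides vanish at `0`,
`g e^F = φ`. Consequently `(φ² / 2)' = φ e^F = g e^{2F}`, so `φ² / 2 = X² / 2`. As `φ' = e^F > 0`
and `φ 0 = 0`, `φ` has the sign of `x`, as `X` does, hence `φ = X`.
-/

open intervalIntegral Real Set

theorem hasDerivAt_integral_of_continuousOn {E : Type*} [NormedAddCommGroup E] [NormedSpace ℝ E]
    [CompleteSpace E] {u : ℝ → E} {U : Set ℝ} {a x : ℝ} (hU : IsOpen U) (hUc : Convex ℝ U)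
    (ha : a ∈ U) (hu : ContinuousOn u U) (hx : x ∈ U) :
    HasDerivAt (fun y => ∫ s in a..y, u s) (u x) x :=
  integral_hasDerivAt_right ((hu.mono (hUc.ordConnected.uIcc_subset ha hx)).intervalIntegrable)
    (hu.stronglyMeasurableAtFilter hU x hx) (hu.continuousAt (hU.mem_nhds hx))

theorem eqOn_of_hasDerivAt_eq {E : Type*} [NormedAddCommGroup E] [NormedSpace ℝ E]
    {u v w : ℝ → E} {U : Set ℝ} {a : ℝ} (hU : IsOpen U) (hUc : Convex ℝ U)
    (hu : ∀ x ∈ U, HasDerivAt u (w x) x) (hv : ∀ x ∈ U, HasDerivAt v (w x) x)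
    (ha : a ∈ U) (huv : u a = v a) : EqOn u v U :=
  hU.eqOn_of_deriv_eq hUc.isPreconnected
    (fun x hx => (hu x hx).differentiableAt.differentiableWithinAt)
    (fun x hx => (hv x hx).differentiableAt.differentiableWithinAt)
    (fun x hx => (hu x hx).deriv.trans (hv x hx).deriv.symm) ha huv

theorem mul_sub_pos_of_hasDerivAt_pos {u u' : ℝ → ℝ} {U : Set ℝ} {a x : ℝ} (hU : IsOpen U)
    (hUc : Convex ℝ U) (hu : ∀ y ∈ U, HasDerivAt u (u' y) y) (hu' : ∀ y ∈ U, 0 < u' y)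
    (ha : a ∈ U) (hua : u a = 0) (hx : x ∈ U) (hxa : x ≠ a) : 0 < u x * (x - a) := by
  have hmono : StrictMonoOn u U := by
    refine strictMonoOn_of_deriv_pos hUc (fun y hy => (hu y hy).continuousAt.continuousWithinAt)
      fun y hy => ?_
    rw [hU.interior_eq] at hy
    exact (hu y hy).deriv ▸ hu' y hy
  rcases hxa.lt_or_gt with hlt | hgt
  · exact mul_pos_of_neg_of_neg (hua ▸ hmono hx ha hlt) (sub_neg.2 hlt)
  · exact mul_pos (hua ▸ hmono ha hx hgt) (sub_pos.2 hgt)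

theorem eq_of_sq_eq_sq_of_mul_pos {a b c : ℝ} (h : a ^ 2 = b ^ 2) (ha : 0 < a * c)
    (hb : 0 < b * c) : a = b := by
  have hprod : (a - b) * ((a + b) * c) = 0 := by linear_combination c * h
  have hsum : (a + b) * c ≠ 0 := by nlinarith
  exact sub_eq_zero.1 ((mul_eq_zero.1 hprod).resolve_right hsum)

theorem hasDerivAt_mul_exp_of_deriv_add_mul_eq_one {f g F : ℝ → ℝ} {x : ℝ}
    (hg : DifferentiableAt ℝ g x) (hF : HasDerivAt F (f x) x)
    (hgf : deriv g x + g x * f x = 1) :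
    HasDerivAt (fun y => g y * exp (F y)) (exp (F x)) x := by
  refine (hg.hasDerivAt.mul hF.exp).congr_deriv ?_
  linear_combination exp (F x) * hgf

theorem half_sq_eqOn_integral_of_eqOn_mul_exp {g F φ : ℝ → ℝ} {U : Set ℝ} (hU : IsOpen U)
    (hUc : Convex ℝ U) (h0 : 0 ∈ U) (hg : ContinuousOn g U) (hF : ContinuousOn F U)
    (hφ : ∀ x ∈ U, HasDerivAt φ (exp (F x)) x) (hφg : EqOn φ (fun x => g x * exp (F x)) U)
    (hφ0 : φ 0 = 0) :
    EqOn (fun x => φ x ^ 2 / 2) (fun x => ∫ s in (0:ℝ)..x, g s * exp (2 * F s)) U := by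
  have hcont : ContinuousOn (fun x => g x * exp (2 * F x)) U :=
    hg.mul (continuous_exp.comp_continuousOn (continuousOn_const.mul hF))
  refine eqOn_of_hasDerivAt_eq hU hUc (fun x hx => ?_)
    (fun x hx => hasDerivAt_integral_of_continuousOn hU hUc h0 hcont hx) h0 (by simp [hφ0])
  refine (((hφ x hx).pow 2).div_const 2).congr_deriv ?_
  rw [hφg hx, two_mul, exp_add]
  ring

theorem stmt_13_general (f g : ℝ → ℝ)
    (hf : ∀ᶠ x in nhds (0:ℝ), AnalyticAt ℝ f x)
    (hg : ∀ᶠ x in nhds (0:ℝ), AnalyticAt ℝ g x)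
    (hg0 : g 0 = 0)
    (F φ X : ℝ → ℝ)
    (hF : ∀ x, F x = ∫ s in (0:ℝ)..x, f s)
    (hφ : ∀ x, φ x = ∫ s in (0:ℝ)..x, Real.exp (F s))
    (hX : ∀ᶠ x in nhds (0:ℝ),
      (X x) ^ 2 / 2 = (∫ s in (0:ℝ)..x, g s * Real.exp (2 * F s)) ∧
      (x ≠ 0 → X x * x > 0))
    (hiso : ∀ᶠ x in nhds (0:ℝ), deriv g x + g x * f x = 1) :
    ∀ᶠ x in nhds (0:ℝ), φ x = X x ∧ g x * Real.exp (F x) = X x := by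
  obtain ⟨ε, hε, hball⟩ := Metric.eventually_nhds_iff_ball.1 (hf.and (hg.and (hX.and hiso)))
  set U := Metric.ball (0:ℝ) ε
  have hU : IsOpen U := Metric.isOpen_ball
  have hUc : Convex ℝ U := convex_ball 0 ε
  have h0 : (0:ℝ) ∈ U := Metric.mem_ball_self hε
  have hFd : ∀ x ∈ U, HasDerivAt F (f x) x := fun x hx => funext hF ▸
    hasDerivAt_integral_of_continuousOn hU hUc h0
      (fun y hy => (hball y hy).1.continuousAt.continuousWithinAt) hx
  have hFc : ContinuousOn F U := fun x hx => (hFd x hx).continuousAt.continuousWithinAt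
  have hφd : ∀ x ∈ U, HasDerivAt φ (exp (F x)) x := fun x hx => funext hφ ▸
    hasDerivAt_integral_of_continuousOn hU hUc h0 (continuous_exp.comp_continuousOn hFc) hx
  have hφ0 : φ 0 = 0 := by simp [hφ]
  have hφg : EqOn φ (fun x => g x * exp (F x)) U :=
    eqOn_of_hasDerivAt_eq hU hUc hφd (fun x hx => hasDerivAt_mul_exp_of_deriv_add_mul_eq_one
      (hball x hx).2.1.differentiableAt (hFd x hx) (hball x hx).2.2.2) h0 (by simp [hφ0, hg0])
  have hφsq := half_sq_eqOn_integral_of_eqOn_mul_exp hU hUc h0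
    (fun y hy => (hball y hy).2.1.continuousAt.continuousWithinAt) hFc hφd hφg hφ0
  refine Metric.eventually_nhds_iff_ball.2 ⟨ε, hε, fun x hx => ?_⟩
  obtain ⟨hXsq, hXsign⟩ := (hball x hx).2.2.1
  have hsq : φ x ^ 2 = X x ^ 2 := by linarith [hφsq hx]
  have hφX : φ x = X x := by
    rcases eq_or_ne x 0 with rfl | hx0
    · rw [hφ0, zero_pow two_ne_zero, eq_comm, pow_eq_zero_iff two_ne_zero] at hsq
      rw [hφ0, hsq]
    · refine eq_of_sq_eq_sq_of_mul_pos hsq ?_ (hXsign hx0)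
      simpa using mul_sub_pos_of_hasDerivAt_pos hU hUc hφd (fun y _ => exp_pos (F y)) h0 hφ0 hx hx0
  exact ⟨hφX, (hφg hx).symm.trans hφX⟩

/-- Chouikha's criterion: if f, g are analytic near 0, x·g(x) > 0 for x ≠ 0 near 0,
and g' + gf = 1 near 0, then φ = X and g·e^F = X near 0 (the Urabe function is 0). -/
theorem stmt_13 (f g : ℝ → ℝ)
    (hf : ∀ᶠ x in nhds (0:ℝ), AnalyticAt ℝ f x)
    (hg : ∀ᶠ x in nhds (0:ℝ), AnalyticAt ℝ g x)
    (hg0 : g 0 = 0) (hg'0 : deriv g 0 = 1)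
    (hxg : ∀ᶠ x in nhds (0:ℝ), x ≠ 0 → x * g x > 0)
    (F φ X : ℝ → ℝ)
    (hF : ∀ x, F x = ∫ s in (0:ℝ)..x, f s)
    (hφ : ∀ x, φ x = ∫ s in (0:ℝ)..x, Real.exp (F s))
    (hX : ∀ᶠ x in nhds (0:ℝ),
      (X x) ^ 2 / 2 = (∫ s in (0:ℝ)..x, g s * Real.exp (2 * F s)) ∧
      (x ≠ 0 → X x * x > 0))
    (hiso : ∀ᶠ x in nhds (0:ℝ), deriv g x + g x * f x = 1) :
    ∀ᶠ x in nhds (0:ℝ), φ x = X x ∧ g x * Real.exp (F x) = X x :=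
  stmt_13_general f g hf hg hg0 F φ X hF hφ hX hiso
end

section
/- Along any solution (x(t), y(t)) of the system ẋ = -y - (4/3)a x³ y, ẏ = x - (16/3)a x² y² + a x⁴ that stays in the region 3 + 4a x³ > 0, the functions u = x(1 + a x³)/(3(3 + 4a x³)^{4/3}) and v = y/(3(3 + 4a x³)^{4/3}) satisfy u̇ = -v and v̇ = u. -/
/-! Along the flow, `w = 3 + 4 a x³` satisfies `ẇ = -4 a x² y · w`, so the common denominator
`D = 3 w^{4/3}` has logarithmic derivative `-(16/3) a x² y`. With this, the quotient rule turns
`u̇ = -v` and `v̇ = u` into polynomial identities in `a`, `x`, `y`. -/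

theorem HasDerivAt.div_of_hasDerivAt_mul_self {f g : ℝ → ℝ} {f' k t : ℝ}
    (hf : HasDerivAt f f' t) (hg : HasDerivAt g (k * g t) t) (hg0 : g t ≠ 0) :
    HasDerivAt (fun s => f s / g s) ((f' - k * f t) / g t) t :=
  (hf.div hg hg0).congr_deriv (by field_simp)

theorem HasDerivAt.rpow_const_of_hasDerivAt_mul_self {w : ℝ → ℝ} {c t : ℝ} (p : ℝ)
    (hw : HasDerivAt w (c * w t) t) (hw0 : w t ≠ 0) :
    HasDerivAt (fun s => w s ^ p) (p * c * w t ^ p) t := by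
  refine (hw.rpow_const (Or.inl hw0)).congr_deriv ?_
  rw [Real.rpow_sub_one hw0]
  field_simp

section Flow

variable {a : ℝ} {x y : ℝ → ℝ} {t : ℝ}

theorem hasDerivAt_weight (hx : HasDerivAt x (-(y t) - (4/3) * a * (x t) ^ 3 * y t) t) :
    HasDerivAt (fun s => 3 + 4 * a * (x s) ^ 3)
      ((-4 * a * (x t) ^ 2 * y t) * (3 + 4 * a * (x t) ^ 3)) t :=
  (((hx.pow 3).const_mul (4 * a)).const_add 3).congr_deriv (by push_cast; ring)

theorem hasDerivAt_denominator (hx : HasDerivAt x (-(y t) - (4/3) * a * (x t) ^ 3 * y t) t)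
    (hw0 : 3 + 4 * a * (x t) ^ 3 ≠ 0) :
    HasDerivAt (fun s => 3 * (3 + 4 * a * (x s) ^ 3) ^ ((4:ℝ)/3))
      ((-(16/3) * a * (x t) ^ 2 * y t) * (3 * (3 + 4 * a * (x t) ^ 3) ^ ((4:ℝ)/3))) t :=
  (((hasDerivAt_weight hx).rpow_const_of_hasDerivAt_mul_self _ hw0).const_mul 3).congr_deriv
    (by ring)

theorem hasDerivAt_numerator (hx : HasDerivAt x (-(y t) - (4/3) * a * (x t) ^ 3 * y t) t) :
    HasDerivAt (fun s => x s * (1 + a * (x s) ^ 3))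
      (-(y t) * (1 + (4/3) * a * (x t) ^ 3) * (1 + 4 * a * (x t) ^ 3)) t :=
  (hx.mul (((hx.pow 3).const_mul a).const_add 1)).congr_deriv
    (by simp only [Pi.pow_apply]; push_cast; ring)

end Flow

/-- u = x(1+ax³)/(3(3+4ax³)^{4/3}), v = y/(3(3+4ax³)^{4/3}) linearizes
ẋ = -y-(4/3)ax³y, ẏ = x-(16/3)ax²y²+ax⁴ on the region 3+4ax³ > 0. -/
theorem stmt_15 (a : ℝ) (x y : ℝ → ℝ)
    (hx : ∀ t, HasDerivAt x (-(y t) - (4/3) * a * (x t) ^ 3 * y t) t)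
    (hy : ∀ t, HasDerivAt y
      (x t - (16/3) * a * (x t) ^ 2 * (y t) ^ 2 + a * (x t) ^ 4) t)
    (hpos : ∀ t, 3 + 4 * a * (x t) ^ 3 > 0) :
    ∀ t,
      HasDerivAt (fun s => x s * (1 + a * (x s) ^ 3) /
          (3 * (3 + 4 * a * (x s) ^ 3) ^ ((4:ℝ)/3)))
        (-(y t / (3 * (3 + 4 * a * (x t) ^ 3) ^ ((4:ℝ)/3)))) t ∧
      HasDerivAt (fun s => y s / (3 * (3 + 4 * a * (x s) ^ 3) ^ ((4:ℝ)/3)))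
        (x t * (1 + a * (x t) ^ 3) /
          (3 * (3 + 4 * a * (x t) ^ 3) ^ ((4:ℝ)/3))) t := by
  intro t
  have hD := hasDerivAt_denominator (hx t) (hpos t).ne'
  have hD0 : 3 * (3 + 4 * a * (x t) ^ 3) ^ ((4:ℝ)/3) ≠ 0 := by
    have := hpos t
    positivity
  exact ⟨((hasDerivAt_numerator (hx t)).div_of_hasDerivAt_mul_self hD hD0).congr_deriv (by ring),
    ((hy t).div_of_hasDerivAt_mul_self hD hD0).congr_deriv (by ring)⟩
end

section
/- Every solution (x(t), y(t)) of the system ẋ = -y, ẏ = x(1+y)³ with initial condition in the region {y > -1} where x² + y²/(1+y)² < 1 is periodic with period independent of the initial condition equal to 2π (isochronous center at the origin). -/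
/-!
Clearing denominators in the first integral, `G = (1 + y)² (I - 1)` obeys the linear equation
`Ġ = 2x(1 + y)² G`, so `G` keeps the sign it has at time `0`; `G < 0` forces `y > -1/2` and
`I < 1` for all time. On that region put `v = y / (1 + y)`: the point `x + iv` turns with angular
speed `1 + y = 1 - ẋ`, so `Z = e^{ix} (x + iv)` satisfies `Ż = iZ` and is `2π`-periodic.
Finally `z ↦ e^{i Re z} z` is injective on the unit disc, because `|e^{iθ} - 1| ≤ |θ|`.
-/

open Real Complex

theorem Real.eq_exp_integral_mul_of_hasDerivAt {g a : ℝ → ℝ} (ha : Continuous a)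
    (hg : ∀ t, HasDerivAt g (a t * g t) t) (t : ℝ) :
    g t = Real.exp (∫ s in (0)..t, a s) * g 0 := by
  have hconst : ∀ t, HasDerivAt (fun t => Real.exp (-∫ s in (0)..t, a s) * g t) 0 t := fun t =>
    ((ha.integral_hasStrictDerivAt 0 t).hasDerivAt.fun_neg.exp.fun_mul (hg t)).congr_deriv
      (by ring)
  have h := is_const_of_deriv_eq_zero (fun t => (hconst t).differentiableAt)
    (fun t => (hconst t).deriv) t 0
  simp only [intervalIntegral.integral_same, neg_zero, Real.exp_zero, one_mul] at h
  rw [← h, ← mul_assoc, ← Real.exp_add, add_neg_cancel, Real.exp_zero, one_mul]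

theorem Complex.eq_exp_mul_of_hasDerivAt {Z : ℝ → ℂ} {c : ℂ}
    (hZ : ∀ t, HasDerivAt Z (c * Z t) t) (t : ℝ) : Z t = exp (t * c) * Z 0 := by
  have hconst : ∀ t : ℝ, HasDerivAt (fun t : ℝ => exp (-(t * c)) * Z t) 0 t := fun t =>
    (((hasDerivAt_id t).ofReal_comp.mul_const c).fun_neg.cexp.fun_mul (hZ t)).congr_deriv
      (by simp only [id, ofReal_one]; ring)
  have h := is_const_of_deriv_eq_zero (fun t => (hconst t).differentiableAt)
    (fun t => (hconst t).deriv) t 0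
  simp only [ofReal_zero, zero_mul, neg_zero, Complex.exp_zero, one_mul] at h
  rw [← h, ← mul_assoc, ← Complex.exp_add, add_neg_cancel, Complex.exp_zero, one_mul]

theorem Complex.periodic_of_hasDerivAt_eq_I_mul {Z : ℝ → ℂ}
    (hZ : ∀ t, HasDerivAt Z (I * Z t) t) : Function.Periodic Z (2 * π) := fun t => by
  rw [eq_exp_mul_of_hasDerivAt hZ, eq_exp_mul_of_hasDerivAt hZ t, ofReal_add, add_mul,
    ofReal_mul, ofReal_ofNat, Complex.exp_periodic]

theorem Complex.eq_of_exp_re_mul_I_mul_eq {z w : ℂ} (hz : ‖z‖ < 1)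
    (h : exp (z.re * I) * z = exp (w.re * I) * w) : z = w := by
  set d := z.re - w.re
  have hw : w = exp (d * I) * z := by
    rw [ofReal_sub, sub_mul, Complex.exp_sub, div_mul_eq_mul_div, h,
      mul_div_cancel_left₀ _ (Complex.exp_ne_zero _)]
  have hd : |d| ≤ |d| * ‖z‖ := calc
    |d| = |((exp (I * d) - 1) * z).re| := by
      rw [sub_one_mul, mul_comm I, ← hw, sub_re, abs_sub_comm]
    _ ≤ ‖exp (I * d) - 1‖ * ‖z‖ := (abs_re_le_norm _).trans (norm_mul _ _).le
    _ ≤ |d| * ‖z‖ := by gcongr; exact Real.norm_exp_I_mul_ofReal_sub_one_le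
  have hd0 : d = 0 := abs_eq_zero.mp (by nlinarith [abs_nonneg d])
  rw [hw, hd0, ofReal_zero, zero_mul, Complex.exp_zero, one_mul]

def clearedIntegral (x y : ℝ) : ℝ := x ^ 2 * (1 + y) ^ 2 - (1 + 2 * y)

noncomputable def planeCoord (x y : ℝ) : ℂ := ⟨x, y / (1 + y)⟩

noncomputable def linearizingCoord (x y : ℝ) : ℂ := exp (x * I) * planeCoord x y

section Pointwise

variable {x y : ℝ}

theorem one_add_pos_of_clearedIntegral_neg (h : clearedIntegral x y < 0) : 0 < 1 + y := by
  unfold clearedIntegral at h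
  nlinarith [sq_nonneg (x * (1 + y))]

theorem clearedIntegral_neg_iff (hy : 0 < 1 + y) :
    clearedIntegral x y < 0 ↔ x ^ 2 + (y / (1 + y)) ^ 2 < 1 := by
  have h : clearedIntegral x y = (1 + y) ^ 2 * (x ^ 2 + (y / (1 + y)) ^ 2 - 1) := by
    unfold clearedIntegral; field_simp; ring
  rw [h, ← mul_zero ((1 + y) ^ 2), mul_lt_mul_iff_of_pos_left (pow_pos hy 2), sub_neg]

theorem norm_planeCoord_lt_one (h : clearedIntegral x y < 0) : ‖planeCoord x y‖ < 1 := by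
  rw [← sq_lt_one_iff₀ (norm_nonneg _), Complex.sq_norm, planeCoord, normSq_mk, ← sq, ← sq,
    ← clearedIntegral_neg_iff (one_add_pos_of_clearedIntegral_neg h)]
  exact h

theorem planeCoord_injective {x' y' : ℝ} (hy : 0 < 1 + y) (hy' : 0 < 1 + y')
    (h : planeCoord x y = planeCoord x' y') : x = x' ∧ y = y' := by
  obtain ⟨hx, hv⟩ := Complex.ext_iff.mp h
  refine ⟨hx, ?_⟩
  rw [planeCoord, planeCoord, div_eq_div_iff hy.ne' hy'.ne'] at hv
  linarith

end Pointwise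

section Trajectory

variable {x y : ℝ → ℝ}

theorem hasDerivAt_clearedIntegral {t : ℝ} (hx : HasDerivAt x (-(y t)) t)
    (hy : HasDerivAt y (x t * (1 + y t) ^ 3) t) :
    HasDerivAt (fun s => clearedIntegral (x s) (y s))
      (2 * x t * (1 + y t) ^ 2 * clearedIntegral (x t) (y t)) t := by
  unfold clearedIntegral
  exact (((hx.fun_pow 2).fun_mul ((hy.const_add 1).fun_pow 2)).fun_sub
    ((hy.const_mul 2).const_add 1)).congr_deriv (by ring)

theorem clearedIntegral_neg (hx : ∀ t, HasDerivAt x (-(y t)) t)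
    (hy : ∀ t, HasDerivAt y (x t * (1 + y t) ^ 3) t)
    (h0 : clearedIntegral (x 0) (y 0) < 0) (t : ℝ) : clearedIntegral (x t) (y t) < 0 := by
  have hcx : Continuous x := continuous_iff_continuousAt.mpr fun t => (hx t).continuousAt
  have hcy : Continuous y := continuous_iff_continuousAt.mpr fun t => (hy t).continuousAt
  rw [Real.eq_exp_integral_mul_of_hasDerivAt (by fun_prop)
    (fun s => hasDerivAt_clearedIntegral (hx s) (hy s)) t]
  exact mul_neg_of_pos_of_neg (Real.exp_pos _) h0

theorem hasDerivAt_linearizingCoord {t : ℝ} (hx : HasDerivAt x (-(y t)) t)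
    (hy : HasDerivAt y (x t * (1 + y t) ^ 3) t) (hy0 : 1 + y t ≠ 0) :
    HasDerivAt (fun s => linearizingCoord (x s) (y s)) (I * linearizingCoord (x t) (y t)) t := by
  have hv : HasDerivAt (fun s => y s / (1 + y s)) (x t * (1 + y t)) t :=
    (hy.div (hy.const_add 1) hy0).congr_deriv (by field_simp; ring)
  have h := (hx.ofReal_comp.mul_const I).cexp.fun_mul
    (hx.ofReal_comp.fun_add (hv.ofReal_comp.mul_const I))
  unfold linearizingCoord planeCoord
  simp only [mk_eq_add_mul_I]
  refine h.congr_deriv ?_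
  have hv' : (y t / (1 + y t) : ℂ) * (1 + y t) = y t := by
    have : (1 + y t : ℂ) ≠ 0 := by exact_mod_cast hy0
    field_simp
  push_cast
  linear_combination (-cexp (x t * I) * (y t / (1 + y t)) * (1 + y t)) * I_sq +
    cexp (x t * I) * hv'

end Trajectory

/-- Isochronicity of the center at the origin of ẋ = -y, ẏ = x(1+y)³:
every solution starting in the region {y > -1, x² + y²/(1+y)² < 1}
is periodic of period 2π. -/
theorem stmt_19 (x y : ℝ → ℝ)
    (hx : ∀ t, HasDerivAt x (-(y t)) t)
    (hy : ∀ t, HasDerivAt y (x t * (1 + y t) ^ 3) t)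
    (h0 : y 0 > -1)
    (hI : (x 0) ^ 2 + (y 0) ^ 2 / (1 + y 0) ^ 2 < 1) :
    ∀ t : ℝ, x (t + 2 * Real.pi) = x t ∧ y (t + 2 * Real.pi) = y t := by
  have hG0 : clearedIntegral (x 0) (y 0) < 0 := by
    rwa [clearedIntegral_neg_iff (by linarith), div_pow]
  have hG := clearedIntegral_neg hx hy hG0
  have hpos : ∀ t, 0 < 1 + y t := fun t => one_add_pos_of_clearedIntegral_neg (hG t)
  have hper : Function.Periodic (fun t => linearizingCoord (x t) (y t)) (2 * π) :=
    periodic_of_hasDerivAt_eq_I_mul fun t =>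
      hasDerivAt_linearizingCoord (hx t) (hy t) (hpos t).ne'
  intro t
  have hplane : planeCoord (x t) (y t) = planeCoord (x (t + 2 * π)) (y (t + 2 * π)) :=
    eq_of_exp_re_mul_I_mul_eq (norm_planeCoord_lt_one (hG t)) (hper t).symm
  exact planeCoord_injective (hpos _) (hpos _) hplane.symm
end
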